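/- Let r ≥ 2 and n ≥ 2. In S_{2rn}, for 1 ≤ j ≤ n let A_j be the 2r-cycle (2r(j-1)+1, …, 2rj) and for 1 ≤ i ≤ n-1 let B_i = ∏_{m=1}^{2r}(2r(i-1)+m, 2ri+m). Let B be an element of the subgroup generated by B_1,…,B_{n-1} with induced block permutation β ∈ S_n (B sends 2r(j-1)+m to 2r(β(j)-1)+m), let J be the support of β, and let the cycles of β on J be τ_1,…,τ_K with supports J_1,…,J_K and lengths |τ_1|,…,|τ_K|. Let d_j (j ∈ J) be integers and let N denote the order of β (equivalently, the order of B). Then for every integer h, ((∏_{j∈J} A_j^{d_j})·B)^{hN} = ∏_{k=1}^{K} (∏_{j∈J_k} A_j)^{h·(N/|τ_k|)·∑_{j∈J_k} d_j}. -/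

import Mathlib

/-!
The `A j` have disjoint supports, so they commute, and `B₀ * A j = A (β j) * B₀`. Hence, with
`P = ∏ A j ^ d j`, `(P * B₀) ^ N = (∏_{t < N} B₀ ^ t * P * B₀ ^ (-t)) * B₀ ^ N`, where `B₀ ^ N = 1`
and `B₀ ^ t * P * B₀ ^ (-t) = ∏ A (β ^ t j) ^ d j`. Collecting exponents, `A j` receives
`∑_{t < N} d (β⁻¹ ^ t j)`, a sum that runs `N / |τ|` times around the cycle `τ` of `β` through `j`.
-/

open Equiv Finset

theorem Finset.noncommProd_univ_comp_equiv {ι G : Type*} [Fintype ι] [Monoid G] (f : ι → G)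
    (σ : ι ≃ ι) (comm comm') : univ.noncommProd (f ∘ σ) comm = univ.noncommProd f comm' := by
  have hσ : univ.val.map σ = univ.val := congrArg val (map_univ_equiv σ)
  simp only [noncommProd, ← Multiset.map_map, hσ]

theorem Finset.noncommProd_univ_eq_of_notMem_eq_one {ι G : Type*} [Fintype ι] [DecidableEq ι]
    [Monoid G] (f : ι → G) (s : Finset ι) (hf : ∀ i ∉ s, f i = 1) (comm comm') :
    univ.noncommProd f comm = s.noncommProd f comm' := by
  refine (noncommProd_congr (union_compl s).symm (fun _ _ => rfl) comm).trans ?_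
  refine (noncommProd_union_of_disjoint disjoint_compl_right f _).trans ?_
  rw [noncommProd_eq_pow_card sᶜ f _ 1 (fun i hi => hf i (mem_compl.1 hi)), one_pow, mul_one]

theorem semiconjBy_pow_perm {G ι : Type*} [Group G] {a : ι → G} {b : G} {σ : Perm ι}
    (hb : ∀ i, SemiconjBy b (a i) (a (σ i))) (k : ℕ) (i : ι) :
    SemiconjBy (b ^ k) (a i) (a ((σ ^ k) i)) := by
  induction k generalizing i with
  | zero => simp
  | succ k ih => simpa only [pow_succ, Perm.mul_apply] using (ih (σ i)).mul_left (hb i)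

section CommutingPowers

variable {G ι : Type*} [Group G] [Fintype ι] {a : ι → G}
  (ha : Pairwise fun i j => Commute (a i) (a j))

/-- `∏ i, a i ^ v i`, with the exponent vector `v` written multiplicatively so that this is a
monoid hom. -/
def zpowProd : Multiplicative (ι → ℤ) →* G :=
  (MonoidHom.noncommPiCoprod (fun i => zpowersHom G (a i))
    fun _ _ hij _ _ => (ha hij).zpow_zpow _ _).comp (MulEquiv.piMultiplicative _).toMonoidHom

theorem zpowProd_ofAdd (v : ι → ℤ) :
    zpowProd ha (.ofAdd v) =
      univ.noncommProd (fun i => a i ^ v i) fun _ _ _ _ hij => (ha hij).zpow_zpow _ _ := rfl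

theorem semiconjBy_zpowProd {b : G} {σ : Perm ι} (hb : ∀ i, SemiconjBy b (a i) (a (σ i)))
    (v : ι → ℤ) : SemiconjBy b (zpowProd ha (.ofAdd v)) (zpowProd ha (.ofAdd (v ∘ ⇑σ⁻¹))) := by
  suffices MulAut.conj b (zpowProd ha (.ofAdd v)) = zpowProd ha (.ofAdd (v ∘ ⇑σ⁻¹)) by
    rw [SemiconjBy, ← this, MulAut.conj_apply, inv_mul_cancel_right]
  have hconj (i : ι) : MulAut.conj b (a i ^ v i) = a (σ i) ^ (v ∘ ⇑σ⁻¹) (σ i) := by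
    rw [map_zpow, MulAut.conj_apply, (hb i).eq, mul_inv_cancel_right]
    simp
  rw [zpowProd_ofAdd, zpowProd_ofAdd]
  refine (map_noncommProd _ _ _ _).trans ?_
  simp only [hconj]
  exact noncommProd_univ_comp_equiv (fun i => a i ^ (v ∘ ⇑σ⁻¹) i) σ _ _

theorem zpowProd_mul_pow {b : G} {σ : Perm ι} (hb : ∀ i, SemiconjBy b (a i) (a (σ i)))
    (v : ι → ℤ) (k : ℕ) :
    (zpowProd ha (.ofAdd v) * b) ^ k =
      zpowProd ha (.ofAdd (∑ t ∈ range k, v ∘ ⇑(σ⁻¹ ^ t))) * b ^ k := by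
  induction k with
  | zero => simp
  | succ k ih =>
    have hk : b ^ k * zpowProd ha (.ofAdd v) = zpowProd ha (.ofAdd (v ∘ ⇑(σ⁻¹ ^ k))) * b ^ k := by
      simpa only [inv_pow] using (semiconjBy_zpowProd ha (semiconjBy_pow_perm hb k) v).eq
    rw [pow_succ, ih, sum_range_succ, ofAdd_add, map_mul, pow_succ]
    simp only [mul_assoc]
    rw [← mul_assoc (b ^ k), hk]
    simp only [mul_assoc]

theorem list_prod_map_sort_zpow [LinearOrder ι] (s : Finset ι) (v : ι → ℤ) :
    ((s.sort (· ≤ ·)).map fun i => a i ^ v i).prod =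
      zpowProd ha (.ofAdd ((s : Set ι).indicator v)) := by
  have hv : ∀ i ∈ s.sort (· ≤ ·), a i ^ v i = a i ^ (s : Set ι).indicator v i := fun i hi => by
    rw [Set.indicator_of_mem (mem_sort _ |>.1 hi)]
  have hv' : ∀ i ∉ s, a i ^ (s : Set ι).indicator v i = 1 := fun i hi => by
    rw [Set.indicator_of_notMem (mt mem_coe.1 hi), zpow_zero]
  rw [List.map_congr_left hv, ← noncommProd_toFinset _ _ ?comm (sort_nodup s _), zpowProd_ofAdd]
  case comm => exact fun _ _ _ _ hij => (ha hij).zpow_zpow _ _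
  exact (noncommProd_congr (sort_toFinset s _) (fun _ _ => rfl) _).trans
    (noncommProd_univ_eq_of_notMem_eq_one _ s hv' _ _).symm

end CommutingPowers

theorem Function.Periodic.sum_range_mul {M : Type*} [AddCommMonoid M] {f : ℕ → M} {c : ℕ}
    (hf : Function.Periodic f c) (q : ℕ) :
    ∑ t ∈ range (c * q), f t = q • ∑ t ∈ range c, f t := by
  induction q with
  | zero => simp
  | succ q ih =>
    rw [Nat.mul_succ, sum_range_add, ih, succ_nsmul]
    congr 1
    refine sum_congr rfl fun t _ => ?_
    rw [add_comm, mul_comm]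
    exact hf.nat_mul q t

namespace Equiv.Perm.IsCycleOn

variable {α M : Type*} [AddCommMonoid M] {σ : Perm α} {s : Finset α} {j : α}

theorem sum_range_card_pow_apply (hσ : σ.IsCycleOn s) (hj : j ∈ s) (g : α → M) :
    ∑ t ∈ range #s, g ((σ ^ t) j) = ∑ i ∈ s, g i := by
  refine sum_nbij (fun t => (σ ^ t) j) (fun t _ => hσ.1.mapsTo.perm_pow t hj) ?_ ?_
    fun _ _ => rfl
  · intro t₁ ht₁ t₂ ht₂ h
    simp only [coe_range, Set.mem_Iio] at ht₁ ht₂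
    simpa [Nat.ModEq, Nat.mod_eq_of_lt ht₁, Nat.mod_eq_of_lt ht₂] using
      (hσ.pow_apply_eq_pow_apply hj).1 h
  · intro i hi
    obtain ⟨t, ht, rfl⟩ := hσ.exists_pow_eq hj hi
    exact ⟨t, by simpa using ht, rfl⟩

theorem sum_range_pow_apply (hσ : σ.IsCycleOn s) (hj : j ∈ s) {N : ℕ} (hN : (σ ^ N) j = j)
    (g : α → M) : ∑ t ∈ range N, g ((σ ^ t) j) = (N / #s) • ∑ i ∈ s, g i := by
  obtain ⟨q, rfl⟩ := (hσ.pow_apply_eq hj).1 hN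
  have hperiodic : Function.Periodic (fun t => g ((σ ^ t) j)) #s := fun t => by
    simp only [pow_add, Perm.mul_apply, hσ.pow_card_apply hj]
  rw [hperiodic.sum_range_mul, hσ.sum_range_card_pow_apply hj,
    Nat.mul_div_cancel_left _ (card_pos.2 ⟨j, hj⟩)]

end Equiv.Perm.IsCycleOn

theorem Equiv.Perm.sum_range_orderOf_indicator_inv_pow_apply {α M : Type*} [Fintype α]
    [DecidableEq α] [AddCommMonoid M] (β : Perm α) (d : α → M) (j : α) :
    ∑ t ∈ range (orderOf β), (β.support : Set α).indicator d ((β⁻¹ ^ t) j) =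
      (β.support : Set α).indicator
        (fun j => (orderOf β / #(β.cycleOf j).support) • ∑ i ∈ (β.cycleOf j).support, d i) j := by
  by_cases hj : j ∈ β.support
  · have hjc : j ∈ (β.cycleOf j).support := Perm.mem_support_cycleOf_iff.2 ⟨.refl _ _, hj⟩
    have hN : (β⁻¹ ^ orderOf β) j = j := by
      rw [inv_pow, pow_orderOf_eq_one, inv_one, Perm.one_apply]
    rw [(β.isCycleOn_support_cycleOf j).inv.sum_range_pow_apply hjc hN,
      Set.indicator_of_mem (mem_coe.2 hj)]
    congr 1
    exact sum_congr rfl fun i hi => Set.indicator_of_mem (Perm.support_cycleOf_le β j hi) d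
  · have hfix (t : ℕ) : (β⁻¹ ^ t) j = j := Perm.pow_apply_eq_self_of_apply_eq_self
      (by rw [Perm.inv_eq_iff_eq, Perm.notMem_support.1 hj]) t
    simp only [hfix, Set.indicator_of_notMem (mt mem_coe.1 hj), sum_const_zero]

section Blocks

variable {ι P X : Type*} (e : ι × P ≃ X) {a : ι → Perm X} {b : Perm X} {σ : Perm ι}

theorem pairwise_commute_of_apply_eq_self (hfix : ∀ i j p, i ≠ j → a j (e (i, p)) = e (i, p)) :
    Pairwise fun i j => Commute (a i) (a j) := by
  intro i j hij
  refine Perm.Disjoint.commute fun x => ?_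
  obtain ⟨⟨k, p⟩, rfl⟩ := e.surjective x
  by_cases hk : k = i
  · subst hk
    exact .inr (hfix _ _ p hij)
  · exact .inl (hfix _ _ p hk)

theorem semiconjBy_of_blockwise {c : P → P} (hact : ∀ j p, a j (e (j, p)) = e (j, c p))
    (hfix : ∀ i j p, i ≠ j → a j (e (i, p)) = e (i, p)) (hb : ∀ i p, b (e (i, p)) = e (σ i, p))
    (j : ι) : SemiconjBy b (a j) (a (σ j)) := by
  refine Equiv.ext fun x => ?_
  obtain ⟨⟨i, p⟩, rfl⟩ := e.surjective x
  simp only [Perm.mul_apply]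
  by_cases hij : i = j
  · subst hij
    rw [hact, hb, hb, hact]
  · rw [hfix _ _ _ hij, hb, hfix _ _ _ (σ.injective.ne hij)]

theorem pow_apply_of_blockwise (hb : ∀ i p, b (e (i, p)) = e (σ i, p)) (k : ℕ) (i : ι) (p : P) :
    (b ^ k) (e (i, p)) = e ((σ ^ k) i, p) := by
  induction k with
  | zero => rfl
  | succ k ih => rw [pow_succ', Perm.mul_apply, ih, hb, ← Perm.mul_apply, ← pow_succ']

theorem pow_eq_one_of_blockwise (hb : ∀ i p, b (e (i, p)) = e (σ i, p)) {N : ℕ}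
    (hN : σ ^ N = 1) : b ^ N = 1 := by
  refine Equiv.ext fun x => ?_
  obtain ⟨⟨i, p⟩, rfl⟩ := e.surjective x
  rw [pow_apply_of_blockwise e hb, hN]
  rfl

end Blocks

def blockEquiv (m n : ℕ) : Fin n × Fin m ≃ Fin (m * n) :=
  finProdFinEquiv.trans (finCongr (Nat.mul_comm n m))

theorem blockEquiv_apply_val {m n : ℕ} (i : Fin n) (p : Fin m) :
    (blockEquiv m n (i, p) : ℕ) = m * i + p := by
  simp [blockEquiv, add_comm]

theorem blockEquiv_apply_div {m n : ℕ} (i : Fin n) (p : Fin m) :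
    (blockEquiv m n (i, p) : ℕ) / m = i := by
  rw [blockEquiv_apply_val, Nat.mul_add_div p.pos, Nat.div_eq_of_lt p.2, add_zero]

theorem blockEquiv_apply_mod {m n : ℕ} (i : Fin n) (p : Fin m) :
    (blockEquiv m n (i, p) : ℕ) % m = p := by
  rw [blockEquiv_apply_val, Nat.mul_add_mod, Nat.mod_eq_of_lt p.2]

theorem stmt17_general (r n : ℕ)
    (A : ℕ → Equiv.Perm (Fin (2 * r * n)))
    (hA : ∀ j < n, ∀ x : Fin (2 * r * n),
      ((A j x : ℕ)) = if (x : ℕ) / (2 * r) = j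
        then 2 * r * j + ((x : ℕ) % (2 * r) + 1) % (2 * r) else (x : ℕ))
    (B₀ : Equiv.Perm (Fin (2 * r * n)))
    (β : Equiv.Perm (Fin n))
    (hβ : ∀ (x : Fin (2 * r * n)) (j : Fin n), (x : ℕ) / (2 * r) = (j : ℕ) →
      ((B₀ x : ℕ)) = 2 * r * ((β j : ℕ)) + (x : ℕ) % (2 * r))
    (d : Fin n → ℤ) (h : ℤ) :
    (((β.support.sort (· ≤ ·)).map fun j : Fin n => A (j : ℕ) ^ d j).prod * B₀) ^
        (h * (orderOf β : ℤ)) =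
      ((β.support.sort (· ≤ ·)).map fun j : Fin n =>
        A (j : ℕ) ^
          (h * ((orderOf β / (β.cycleOf j).support.card : ℕ) : ℤ) *
            ∑ j' ∈ (β.cycleOf j).support, d j')).prod := by
  set e := blockEquiv (2 * r) n
  set a : Fin n → Perm (Fin (2 * r * n)) := fun j => A j
  have hfix : ∀ i j p, i ≠ j → a j (e (i, p)) = e (i, p) := fun i j p hij =>
    Fin.ext <| by rw [hA j j.2, blockEquiv_apply_div, if_neg (Fin.val_ne_of_ne hij)]
  have hact : ∀ j p, a j (e (j, p)) = e (j, ⟨(p + 1) % (2 * r), Nat.mod_lt _ p.pos⟩) := fun j p =>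
    Fin.ext <| by
      rw [hA j j.2, blockEquiv_apply_div, if_pos rfl, blockEquiv_apply_mod, blockEquiv_apply_val]
  have hb : ∀ i p, B₀ (e (i, p)) = e (β i, p) := fun i p =>
    Fin.ext <| by rw [hβ _ i (blockEquiv_apply_div i p), blockEquiv_apply_mod, blockEquiv_apply_val]
  have ha := pairwise_commute_of_apply_eq_self e hfix
  rw [list_prod_map_sort_zpow ha, list_prod_map_sort_zpow ha, mul_comm h, zpow_mul, zpow_natCast,
    zpowProd_mul_pow ha (semiconjBy_of_blockwise e hact hfix hb),
    pow_eq_one_of_blockwise e hb (pow_orderOf_eq_one β), mul_one, ← map_zpow, ← ofAdd_zsmul]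
  congr 2
  funext j
  simp only [Pi.smul_apply, Finset.sum_apply, Function.comp_apply,
    Perm.sum_range_orderOf_indicator_inv_pow_apply, smul_eq_mul, nsmul_eq_mul, mul_assoc]
  exact (Set.indicator_mul_right _ (fun _ => h) _).symm

/-- Let `r ≥ 2`, `n ≥ 2`.  In `S_{2rn}` (on `Fin (2*r*n)`,
`0`-indexed), for `0 ≤ j < n` let `A j` be the `2r`-cycle on the `j`-th block
`𝔸_j = {2rj, …, 2rj + 2r - 1}` and for `0 ≤ i < n-1` let `B i` swap blocks `i` and
`i+1` position-by-position.  Let `B₀` be in the subgroup generated by the `B i`'s,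
with induced block permutation `β ∈ S_n` (so `B₀` sends `2r·j + m` to `2r·β(j) + m`),
let `J` be the support of `β`, let the cycles of `β` have supports `J_k` and lengths
`|τ_k|`, let `d_j` be integers, and let `N` be the order of `β`.  Then for every
integer `h`,
`((∏_{j∈J} A_j^{d_j}) · B₀)^{hN} = ∏_k (∏_{j∈J_k} A_j)^{h·(N/|τ_k|)·∑_{j∈J_k} d_j}`;
since the `A_j` pairwise commute, the right-hand side is written below as the product
over `j ∈ J` of `A_j` raised to `h·(N/|τ_{k(j)}|)·∑_{j'∈J_{k(j)}} d_{j'}`, where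
`τ_{k(j)}` is the cycle of `β` containing `j` (its support is that of `β.cycleOf j`). -/
theorem stmt17 (r n : ℕ) (hr : 2 ≤ r) (hn : 2 ≤ n)
    (A : ℕ → Equiv.Perm (Fin (2 * r * n)))
    (hA : ∀ j < n, ∀ x : Fin (2 * r * n),
      ((A j x : ℕ)) = if (x : ℕ) / (2 * r) = j
        then 2 * r * j + ((x : ℕ) % (2 * r) + 1) % (2 * r) else (x : ℕ))
    (B : ℕ → Equiv.Perm (Fin (2 * r * n)))
    (hB : ∀ i, i + 1 < n → ∀ x : Fin (2 * r * n),
      ((B i x : ℕ)) = if (x : ℕ) / (2 * r) = i then (x : ℕ) + 2 * r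
        else if (x : ℕ) / (2 * r) = i + 1 then (x : ℕ) - 2 * r else (x : ℕ))
    (B₀ : Equiv.Perm (Fin (2 * r * n)))
    (hB₀ : B₀ ∈ Subgroup.closure (B '' {i | i + 1 < n}))
    (β : Equiv.Perm (Fin n))
    (hβ : ∀ (x : Fin (2 * r * n)) (j : Fin n), (x : ℕ) / (2 * r) = (j : ℕ) →
      ((B₀ x : ℕ)) = 2 * r * ((β j : ℕ)) + (x : ℕ) % (2 * r))
    (d : Fin n → ℤ) (h : ℤ) :
    (((β.support.sort (· ≤ ·)).map fun j : Fin n => A (j : ℕ) ^ d j).prod * B₀) ^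
        (h * (orderOf β : ℤ)) =
      ((β.support.sort (· ≤ ·)).map fun j : Fin n =>
        A (j : ℕ) ^
          (h * ((orderOf β / (β.cycleOf j).support.card : ℕ) : ℤ) *
            ∑ j' ∈ (β.cycleOf j).support, d j')).prod :=
  stmt17_general r n A hA B₀ β hβ d h
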